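/- arXiv:2212.12100 — 5 statements merged into one kernel-verified Lean document; each statement's English description precedes it below -/
import Mathlib

section
/- A closed linear subspace M of a locally convex Hausdorff topological vector space X is a polyhedral convex set if and only if M has finite codimension in X. -/
open Set Pointwise

def IsPolyhedral {X : Type*} [AddCommGroup X] [Module ℝ X] [TopologicalSpace X]
    (P : Set X) : Prop :=
  ∃ (m : ℕ) (f : Fin m → X →L[ℝ] ℝ) (α : Fin m → ℝ),
    P = {x : X | ∀ i, f i x ≤ α i}

def IsGPolyhedral {X : Type*} [AddCommGroup X] [Module ℝ X] [TopologicalSpace X]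
    (Q : Set X) : Prop :=
  ∃ (P : Set X) (a : X) (L : Submodule ℝ X),
    IsPolyhedral P ∧ IsClosed (L : Set X) ∧ Q = P ∩ (a +ᵥ (L : Set X))

def normalCone {X : Type*} [AddCommGroup X] [Module ℝ X] [TopologicalSpace X]
    (Ω : Set X) (xb : X) : Set (X →L[ℝ] ℝ) :=
  {f | ∀ x ∈ Ω, f (x - xb) ≤ 0}

def gph {X Y : Type*} (F : X → Set Y) : Set (X × Y) := {p | p.2 ∈ F p.1}

def coderiv {X Y : Type*} [AddCommGroup X] [Module ℝ X] [TopologicalSpace X]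
    [AddCommGroup Y] [Module ℝ Y] [TopologicalSpace Y]
    (F : X → Set Y) (xb : X) (yb : Y) (v : Y →L[ℝ] ℝ) : Set (X →L[ℝ] ℝ) :=
  {u | ∀ x : X, ∀ y ∈ F x, u (x - xb) - v (y - yb) ≤ 0}

def epi {X : Type*} (f : X → EReal) : Set (X × ℝ) := {p | f p.1 ≤ (p.2 : EReal)}

def subdiff {X : Type*} [AddCommGroup X] [Module ℝ X] [TopologicalSpace X]
    (f : X → EReal) (xb : X) : Set (X →L[ℝ] ℝ) :=
  {g | ∀ x : X, ((g (x - xb) : ℝ) : EReal) + f xb ≤ f x}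

def singSubdiff {X : Type*} [AddCommGroup X] [Module ℝ X] [TopologicalSpace X]
    (f : X → EReal) (xb : X) : Set (X →L[ℝ] ℝ) :=
  {g | ∀ x : X, ∀ α : ℝ, f x ≤ (α : EReal) → g (x - xb) ≤ 0}

variable {X : Type*} [AddCommGroup X] [Module ℝ X] [TopologicalSpace X]
  [IsTopologicalAddGroup X] [ContinuousSMul ℝ X] [LocallyConvexSpace ℝ X] [T2Space X]
variable {Y : Type*} [AddCommGroup Y] [Module ℝ Y] [TopologicalSpace Y]
  [IsTopologicalAddGroup Y] [ContinuousSMul ℝ Y] [LocallyConvexSpace ℝ Y] [T2Space Y]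
variable {Z : Type*} [AddCommGroup Z] [Module ℝ Z] [TopologicalSpace Z]
  [IsTopologicalAddGroup Z] [ContinuousSMul ℝ Z] [LocallyConvexSpace ℝ Z] [T2Space Z]

/-! If a subspace `L` equals `{x | ∀ i, f i x ≤ α i}`, then `0 ∈ L` gives `α i ≥ 0`, and since `L`
is stable under all scalings `t • x`, every `f i` vanishes on `L`. Hence `L` is the common kernel of
the `f i`, and `X ⧸ L` embeds linearly into `ℝ^m`. Conversely, if `L` is closed then `X ⧸ L` is
Hausdorff, so when it is finite-dimensional the coordinate functionals of a basis of `X ⧸ L` are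
continuous; composed with the quotient map they cut `L` out by the inequalities `± gᵢ ≤ 0`. -/

theorem eq_zero_of_forall_mul_le {𝕜 : Type*} [Field 𝕜] [LinearOrder 𝕜] [IsStrictOrderedRing 𝕜]
    {a b : 𝕜} (h : ∀ t : 𝕜, t * a ≤ b) : a = 0 := by
  by_contra ha
  have := h ((b + 1) / a)
  rw [div_mul_cancel₀ _ ha] at this
  linarith

namespace Submodule

theorem coe_eq_setOf_forall_eq_zero_of_coe_eq_setOf_forall_le {𝕜 M ι : Type*} [Field 𝕜]
    [LinearOrder 𝕜] [IsStrictOrderedRing 𝕜] [AddCommGroup M] [Module 𝕜 M] (L : Submodule 𝕜 M)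
    (f : ι → M →ₗ[𝕜] 𝕜) (α : ι → 𝕜) (hL : (L : Set M) = {x | ∀ i, f i x ≤ α i}) :
    (L : Set M) = {x | ∀ i, f i x = 0} := by
  have mem_iff (x : M) : x ∈ L ↔ ∀ i, f i x ≤ α i := Set.ext_iff.mp hL x
  have hα (i : ι) : 0 ≤ α i := by simpa using (mem_iff 0).mp L.zero_mem i
  ext x
  refine ⟨fun hx i => eq_zero_of_forall_mul_le (b := α i) fun t => ?_,
    fun hx => (mem_iff x).mpr fun i => ?_⟩
  · simpa using (mem_iff (t • x)).mp (L.smul_mem t hx) i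
  · simpa [hx i] using hα i

theorem finiteDimensional_quotient_of_coe_eq_setOf_forall_eq_zero {K M ι : Type*} [Field K]
    [AddCommGroup M] [Module K M] [Finite ι] (L : Submodule K M) (f : ι → M →ₗ[K] K)
    (hL : (L : Set M) = {x | ∀ i, f i x = 0}) : FiniteDimensional K (M ⧸ L) := by
  obtain rfl : L = LinearMap.ker (LinearMap.pi f) :=
    SetLike.coe_injective (hL.trans (by ext; simp [funext_iff]))
  exact Module.Finite.equiv (LinearMap.pi f).quotKerEquivRange.symm

theorem exists_coe_eq_setOf_forall_eq_zero {𝕜 E : Type*} [NontriviallyNormedField 𝕜]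
    [CompleteSpace 𝕜] [AddCommGroup E] [Module 𝕜 E] [TopologicalSpace E] [IsTopologicalAddGroup E]
    [ContinuousSMul 𝕜 E] (L : Submodule 𝕜 E) [IsClosed (L : Set E)]
    [FiniteDimensional 𝕜 (E ⧸ L)] :
    ∃ (n : ℕ) (g : Fin n → E →L[𝕜] 𝕜), (L : Set E) = {x | ∀ i, g i x = 0} := by
  let b := Module.finBasis 𝕜 (E ⧸ L)
  refine ⟨_, fun i => (LinearMap.toContinuousLinearMap (b.coord i)).comp L.mkQL, ?_⟩
  ext x
  simpa [Quotient.mk_eq_zero] using (b.forall_coord_eq_zero_iff (x := L.mkQ x)).symm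

end Submodule

section Polyhedral

variable {E : Type*} [AddCommGroup E] [Module ℝ E] [TopologicalSpace E]

theorem isPolyhedral_setOf_forall_le {ι : Type*} [Finite ι] (f : ι → E →L[ℝ] ℝ) (α : ι → ℝ) :
    IsPolyhedral {x : E | ∀ i, f i x ≤ α i} := by
  obtain ⟨m, ⟨e⟩⟩ := Finite.exists_equiv_fin ι
  refine ⟨m, f ∘ e.symm, α ∘ e.symm, ?_⟩
  ext x
  simp [e.symm.forall_congr_left]

theorem isPolyhedral_setOf_forall_eq_zero {ι : Type*} [Finite ι] (f : ι → E →L[ℝ] ℝ) :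
    IsPolyhedral {x : E | ∀ i, f i x = 0} := by
  convert isPolyhedral_setOf_forall_le (Sum.elim f (-f)) 0 using 1
  ext x
  simp [le_antisymm_iff, forall_and]

theorem IsPolyhedral.finiteDimensional_quotient {L : Submodule ℝ E}
    (h : IsPolyhedral (L : Set E)) : FiniteDimensional ℝ (E ⧸ L) := by
  obtain ⟨m, f, α, hP⟩ := h
  exact L.finiteDimensional_quotient_of_coe_eq_setOf_forall_eq_zero _
    (L.coe_eq_setOf_forall_eq_zero_of_coe_eq_setOf_forall_le (fun i => f i) α hP)

theorem Submodule.isPolyhedral_of_finiteDimensional_quotient [IsTopologicalAddGroup E]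
    [ContinuousSMul ℝ E] (L : Submodule ℝ E) [IsClosed (L : Set E)]
    [FiniteDimensional ℝ (E ⧸ L)] : IsPolyhedral (L : Set E) := by
  obtain ⟨n, g, hg⟩ := L.exists_coe_eq_setOf_forall_eq_zero
  exact hg ▸ isPolyhedral_setOf_forall_eq_zero g

end Polyhedral

theorem closed_subspace_polyhedral_iff_finite_codim
    (L : Submodule ℝ X) (hL : IsClosed (L : Set X)) :
    IsPolyhedral (L : Set X) ↔ FiniteDimensional ℝ (X ⧸ L) :=
  haveI := hL
  ⟨IsPolyhedral.finiteDimensional_quotient, fun _ => L.isPolyhedral_of_finiteDimensional_quotient⟩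
end

section
/- If P = {x ∈ X : ⟨x_i*, x⟩ ≤ α_i, i = 1,…,m} is a polyhedral convex set and x̄ ∈ P, then N(x̄; P) = cone{x_i* : i ∈ I(x̄)}, where I(x̄) = {i : ⟨x_i*, x̄⟩ = α_i} is the active index set. -/
/-!
A normal vector `g` at `xb` is nonpositive on every direction `d` that the active constraints
allow, because `xb + t • d` stays in the polyhedron for small `t > 0`. Farkas' lemma for finitely
many functionals then writes `g` as a nonnegative combination of the active `xs i`. Farkas' lemma
itself is proved algebraically by Fourier–Motzkin elimination: if `g` is not already controlled by
the functionals `f i`, `i ∈ s`, there is `w` with `f i w ≤ 0` on `s`, `f j w = 1` and `g w > 0`,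
and the induction hypothesis applies to `f i - f i w • f j` and `g - g w • f j`.
-/

open Set Pointwise

variable {X : Type*} [AddCommGroup X] [Module ℝ X] [TopologicalSpace X]
  [IsTopologicalAddGroup X] [ContinuousSMul ℝ X] [LocallyConvexSpace ℝ X] [T2Space X]
variable {Y : Type*} [AddCommGroup Y] [Module ℝ Y] [TopologicalSpace Y]
  [IsTopologicalAddGroup Y] [ContinuousSMul ℝ Y] [LocallyConvexSpace ℝ Y] [T2Space Y]
variable {Z : Type*} [AddCommGroup Z] [Module ℝ Z] [TopologicalSpace Z]
  [IsTopologicalAddGroup Z] [ContinuousSMul ℝ Z] [LocallyConvexSpace ℝ Z] [T2Space Z]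

open Filter Topology

section Farkas

lemma Finset.sum_insert_update_smul {R N ι : Type*} [Semiring R] [AddCommMonoid N] [Module R N]
    [DecidableEq ι] {j : ι} {s : Finset ι} (hj : j ∉ s) (c : ι → R) (a : R) (f : ι → N) :
    ∑ i ∈ insert j s, Function.update c j a i • f i = a • f j + ∑ i ∈ s, c i • f i := by
  rw [Finset.sum_insert hj, Function.update_self]
  congr 1
  exact Finset.sum_congr rfl fun i hi => by
    rw [Function.update_of_ne (ne_of_mem_of_not_mem hi hj)]

variable {𝕜 M ι : Type*} [Field 𝕜] [LinearOrder 𝕜] [IsStrictOrderedRing 𝕜]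
  [AddCommGroup M] [Module 𝕜 M] [DecidableEq ι]

lemma forall_nonpos_sub_smul_of_forall_nonpos_insert {f : ι → Module.Dual 𝕜 M}
    {g : Module.Dual 𝕜 M} {j : ι} {s : Finset ι} {w : M} (hjw : f j w = 1)
    (h : ∀ x, (∀ i ∈ insert j s, f i x ≤ 0) → g x ≤ 0) (x : M)
    (hx : ∀ i ∈ s, (f i - f i w • f j) x ≤ 0) : (g - g w • f j) x ≤ 0 := by
  have hproj := h (x - f j x • w) <| (Finset.forall_mem_insert _ _ _).2
    ⟨by simp [hjw], fun i hi => by simpa [mul_comm] using hx i hi⟩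
  simpa [mul_comm] using hproj

theorem exists_nonneg_sum_smul_eq_of_forall_nonpos (s : Finset ι) :
    ∀ (f : ι → Module.Dual 𝕜 M) (g : Module.Dual 𝕜 M),
      (∀ x, (∀ i ∈ s, f i x ≤ 0) → g x ≤ 0) →
      ∃ c : ι → 𝕜, (∀ i, 0 ≤ c i) ∧ g = ∑ i ∈ s, c i • f i := by
  induction s using Finset.induction_on with
  | empty =>
    intro f g h
    refine ⟨0, fun _ => le_rfl, LinearMap.ext fun x => ?_⟩
    have h₁ := h x (by simp)
    have h₂ := h (-x) (by simp)
    simp only [map_neg, Finset.sum_empty, LinearMap.zero_apply] at h₂ ⊢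
    linarith
  | insert j s hj ih =>
    intro f g h
    by_cases hs : ∀ x, (∀ i ∈ s, f i x ≤ 0) → g x ≤ 0
    · obtain ⟨c, hc, rfl⟩ := ih f g hs
      refine ⟨Function.update c j 0, fun i => ?_, ?_⟩
      · rcases eq_or_ne i j with rfl | hi <;> simp [*]
      · rw [Finset.sum_insert_update_smul hj, zero_smul, zero_add]
    push Not at hs
    obtain ⟨z, hzs, hgz⟩ := hs
    have hjz : 0 < f j z := by
      by_contra! hjz
      exact (h z ((Finset.forall_mem_insert _ _ _).2 ⟨hjz, hzs⟩)).not_gt hgz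
    set w := (f j z)⁻¹ • z
    have hjw : f j w = 1 := by simp [w, hjz.ne']
    have hsw : ∀ i ∈ s, f i w ≤ 0 := fun i hi => by
      simpa [w] using mul_nonpos_of_nonneg_of_nonpos (inv_nonneg.2 hjz.le) (hzs i hi)
    have hgw : 0 < g w := by simpa [w] using mul_pos (inv_pos.2 hjz) hgz
    obtain ⟨c, hc, hcG⟩ := ih (fun i => f i - f i w • f j) (g - g w • f j)
      (forall_nonpos_sub_smul_of_forall_nonpos_insert hjw h)
    refine ⟨Function.update c j (g w - ∑ i ∈ s, c i * f i w), fun i => ?_, ?_⟩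
    · rcases eq_or_ne i j with rfl | hi
      · have := Finset.sum_nonpos fun i hi => mul_nonpos_of_nonneg_of_nonpos (hc i) (hsw i hi)
        simp only [Function.update_self]
        linarith
      · simp [hi, hc]
    · have hg : g = g w • f j + ∑ i ∈ s, c i • (f i - f i w • f j) := by
        rw [← hcG]; abel
      rw [Finset.sum_insert_update_smul hj]
      conv_lhs => rw [hg]
      simp only [smul_sub, smul_smul, Finset.sum_sub_distrib, sub_smul, Finset.sum_smul]
      abel

end Farkas

section Polyhedron

variable {E ι : Type*} [AddCommGroup E] [Module ℝ E]

theorem eventually_forall_apply_add_smul_le [Finite ι] {f : ι → Module.Dual ℝ E}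
    {α : ι → ℝ} {x d : E} (hx : ∀ i, f i x ≤ α i) (hd : ∀ i, f i x = α i → f i d ≤ 0) :
    ∀ᶠ t in 𝓝[≥] (0 : ℝ), ∀ i, f i (x + t • d) ≤ α i := by
  refine eventually_all.2 fun i => ?_
  simp only [map_add, map_smul, smul_eq_mul]
  rcases (hx i).eq_or_lt with hi | hi
  · filter_upwards [self_mem_nhdsWithin] with t (ht : 0 ≤ t)
    nlinarith [hd i hi]
  · have hlim : Tendsto (fun t : ℝ => f i x + t * f i d) (𝓝 0) (𝓝 (f i x)) :=
      (by fun_prop : Continuous fun t : ℝ => f i x + t * f i d).tendsto' 0 _ (by simp)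
    exact nhdsWithin_le_nhds ((hlim.eventually (eventually_lt_nhds hi)).mono fun _ => le_of_lt)

variable [TopologicalSpace E] {f : ι → E →L[ℝ] ℝ} {α : ι → ℝ} {xb : E}

theorem nonpos_of_mem_normalCone_polyhedron [Finite ι] {g : E →L[ℝ] ℝ} {d : E}
    (hg : g ∈ normalCone {x | ∀ i, f i x ≤ α i} xb) (hxb : ∀ i, f i xb ≤ α i)
    (hd : ∀ i, f i xb = α i → f i d ≤ 0) : g d ≤ 0 := by
  have hsmall := eventually_forall_apply_add_smul_le (f := fun i => (f i : E →ₗ[ℝ] ℝ)) hxb hd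
  obtain ⟨t, ht, htpos⟩ :=
    (hsmall.filter_mono (nhdsWithin_mono _ Ioi_subset_Ici_self) |>.and self_mem_nhdsWithin).exists
  have hgt := hg _ ht
  rw [add_sub_cancel_left, map_smul, smul_eq_mul] at hgt
  exact nonpos_of_mul_nonpos_right hgt htpos

theorem sum_smul_mem_normalCone_polyhedron [Fintype ι] {c : ι → ℝ} (hc : ∀ i, 0 ≤ c i)
    (hc_active : ∀ i, f i xb ≠ α i → c i = 0) :
    ∑ i, c i • f i ∈ normalCone {x | ∀ i, f i x ≤ α i} xb := by
  intro x hx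
  rw [sum_apply]
  refine Finset.sum_nonpos fun i _ => ?_
  rw [smul_apply, smul_eq_mul]
  by_cases hi : f i xb = α i
  · exact mul_nonpos_of_nonneg_of_nonpos (hc i) (by rw [map_sub, hi]; linarith [hx i])
  · simp [hc_active i hi]

end Polyhedron

theorem normalCone_polyhedron_eq_cone_active
    (m : ℕ) (xs : Fin m → X →L[ℝ] ℝ) (α : Fin m → ℝ)
    (P : Set X) (hP : P = {x : X | ∀ i, xs i x ≤ α i})
    (xb : X) (hxb : xb ∈ P) :
    normalCone P xb =
      {g : X →L[ℝ] ℝ | ∃ c : Fin m → ℝ, (∀ i, 0 ≤ c i) ∧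
        (∀ i, xs i xb ≠ α i → c i = 0) ∧ g = ∑ i, c i • xs i} := by
  subst hP
  ext g
  refine ⟨fun hg => ?_, ?_⟩
  · classical
    let active := Finset.univ.filter fun i => xs i xb = α i
    obtain ⟨c, hc, hgc⟩ := exists_nonneg_sum_smul_eq_of_forall_nonpos active
      (fun i => (xs i : X →ₗ[ℝ] ℝ)) g fun d hd =>
        nonpos_of_mem_normalCone_polyhedron hg hxb fun i hi => hd i (by simpa [active] using hi)
    refine ⟨fun i => if xs i xb = α i then c i else 0, fun i => ?_, fun i hi => if_neg hi,
      ContinuousLinearMap.coe_injective ?_⟩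
    · by_cases hi : xs i xb = α i <;> simp [hi, hc]
    · rw [hgc, ContinuousLinearMap.toLinearMap_sum, Finset.sum_filter]
      exact Finset.sum_congr rfl fun i _ => by split_ifs with hi <;> simp [hi]
  · rintro ⟨c, hc, hc_active, rfl⟩
    exact sum_smul_mem_normalCone_polyhedron hc hc_active
end

section
/- If P is a polyhedral convex set and Q is a generalized polyhedral convex set in X, then for every x̄ ∈ P ∩ Q, N(x̄; P ∩ Q) = N(x̄; P) + N(x̄; Q). -/
open Set Pointwise

variable {X : Type*} [AddCommGroup X] [Module ℝ X] [TopologicalSpace X]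
  [IsTopologicalAddGroup X] [ContinuousSMul ℝ X] [LocallyConvexSpace ℝ X] [T2Space X]
variable {Y : Type*} [AddCommGroup Y] [Module ℝ Y] [TopologicalSpace Y]
  [IsTopologicalAddGroup Y] [ContinuousSMul ℝ Y] [LocallyConvexSpace ℝ Y] [T2Space Y]
variable {Z : Type*} [AddCommGroup Z] [Module ℝ Z] [TopologicalSpace Z]
  [IsTopologicalAddGroup Z] [ContinuousSMul ℝ Z] [LocallyConvexSpace ℝ Z] [T2Space Z]

/-!
Write `P = {f ≤ α}` and `Q = {f₂ ≤ α₂} ∩ (a + L)`. A functional `g` normal to `P ∩ Q` at `xb`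
satisfies `g w ≤ 0` for every `w ∈ L` with `f w ≤ α - f xb` and `f₂ w ≤ α₂ - f₂ xb`, a finite
system of inequalities whose right-hand sides are nonnegative. Homogenizing it and applying
Farkas' lemma in `L × ℝ` gives Lagrange multipliers `λ, μ ≥ 0` with complementary slackness and
`g = ∑ λᵢ fᵢ + ∑ μⱼ f₂ⱼ` on `L`. Complementary slackness makes `∑ λᵢ fᵢ` normal to `P` and
`∑ μⱼ f₂ⱼ` normal to `{f₂ ≤ α₂}`, while the remainder vanishes on `L`, so it is normal to `a + L`.

Farkas' lemma is proved by Fourier–Motzkin elimination: if the inequalities other than `a ≤ 0`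
do not already force `g ≤ 0`, a witness `x₀` of this has `a x₀ > 0`, and composing everything with
the projection onto `ker a` along `x₀` eliminates `a`.
-/

section Farkas

variable {𝕜 V : Type*} [Field 𝕜] [AddCommGroup V] [Module 𝕜 V]

def LinearMap.projKerAlong (a : V →ₗ[𝕜] 𝕜) (x₀ : V) : V →ₗ[𝕜] V :=
  LinearMap.id - (a x₀)⁻¹ • a.smulRight x₀

lemma LinearMap.comp_projKerAlong (f a : V →ₗ[𝕜] 𝕜) (x₀ : V) :
    f ∘ₗ a.projKerAlong x₀ = f - ((a x₀)⁻¹ * f x₀) • a := by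
  ext x
  simp only [projKerAlong, comp_apply, sub_apply, id_apply, smul_apply, smulRight_apply, map_sub,
    map_smul, smul_eq_mul]
  ring

lemma LinearMap.apply_projKerAlong_self {a : V →ₗ[𝕜] 𝕜} {x₀ : V} (ha : a x₀ ≠ 0) (x : V) :
    a (a.projKerAlong x₀ x) = 0 := by
  rw [← comp_apply, comp_projKerAlong, inv_mul_cancel₀ ha, one_smul, sub_self, zero_apply]

variable [LinearOrder 𝕜] [IsStrictOrderedRing 𝕜]

lemma PointedCone.mem_hull_insert_of_comp_mem_hull {a g : V →ₗ[𝕜] 𝕜} {s : Set (V →ₗ[𝕜] 𝕜)}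
    {x₀ : V} (hs : ∀ f ∈ s, f x₀ ≤ 0) (ha : 0 < a x₀) (hg : 0 ≤ g x₀)
    (h : g ∘ₗ a.projKerAlong x₀ ∈ hull 𝕜 ((· ∘ₗ a.projKerAlong x₀) '' s)) :
    g ∈ hull 𝕜 (insert a s) := by
  have ha_mem : a ∈ hull 𝕜 (insert a s) := subset_hull (mem_insert a s)
  have hcomp_le : hull 𝕜 ((· ∘ₗ a.projKerAlong x₀) '' s) ≤ hull 𝕜 (insert a s) := by
    refine Submodule.span_le.mpr ?_
    rintro _ ⟨f, hf, rfl⟩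
    dsimp only
    rw [SetLike.mem_coe, LinearMap.comp_projKerAlong, sub_eq_add_neg, (neg_smul _ a).symm]
    exact add_mem (subset_hull (mem_insert_of_mem a hf))
      (smul_mem _ (neg_nonneg.mpr (mul_nonpos_of_nonneg_of_nonpos (inv_pos.mpr ha).le (hs f hf)))
        ha_mem)
  rw [← sub_add_cancel g (((a x₀)⁻¹ * g x₀) • a), ← LinearMap.comp_projKerAlong]
  exact add_mem (hcomp_le h) (smul_mem _ (mul_nonneg (inv_pos.mpr ha).le hg) ha_mem)

/-- **Farkas' lemma** for finitely many linear functionals. -/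
theorem PointedCone.mem_hull_range_of_forall_nonpos {n : ℕ} (h : Fin n → V →ₗ[𝕜] 𝕜)
    (g : V →ₗ[𝕜] 𝕜) (hg : ∀ x, (∀ i, h i x ≤ 0) → g x ≤ 0) : g ∈ hull 𝕜 (range h) := by
  induction n generalizing g with
  | zero =>
    have hg0 : g = 0 := LinearMap.ext fun x =>
      le_antisymm (hg x finZeroElim) (by simpa using hg (-x) finZeroElim)
    exact hg0 ▸ zero_mem _
  | succ n ih =>
    rw [← Fin.cons_self_tail h, Fin.range_cons]
    by_cases htail : ∀ x, (∀ i, Fin.tail h i x ≤ 0) → g x ≤ 0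
    · exact Submodule.span_mono (subset_insert _ _) (ih _ g htail)
    push Not at htail
    obtain ⟨x₀, hx₀, hgx₀⟩ := htail
    have ha : 0 < h 0 x₀ := by
      by_contra! ha
      exact hgx₀.not_ge (hg x₀ (Fin.cases ha hx₀))
    refine mem_hull_insert_of_comp_mem_hull (by simpa using hx₀) ha hgx₀.le ?_
    rw [← range_comp]
    refine ih _ _ fun x hx => hg _ (Fin.cases ?_ hx)
    exact (LinearMap.apply_projKerAlong_self ha.ne' x).le

theorem LinearMap.exists_nonneg_sum_smul_eq_of_forall_nonpos {ι : Type*} [Fintype ι]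
    (h : ι → V →ₗ[𝕜] 𝕜) (g : V →ₗ[𝕜] 𝕜) (hg : ∀ x, (∀ i, h i x ≤ 0) → g x ≤ 0) :
    ∃ l : ι → 𝕜, (∀ i, 0 ≤ l i) ∧ ∑ i, l i • h i = g := by
  obtain ⟨n, ⟨e⟩⟩ := Finite.exists_equiv_fin ι
  have hmem := PointedCone.mem_hull_range_of_forall_nonpos (h ∘ e.symm) g
    fun x hx => hg x fun i => by simpa using hx (e i)
  rw [EquivLike.range_comp] at hmem
  obtain ⟨c, hc⟩ := (Submodule.mem_span_range_iff_exists_fun _).mp hmem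
  exact ⟨fun i => c i, fun i => (c i).2, hc⟩

theorem LinearMap.exists_lagrange_multipliers {ι : Type*} [Fintype ι] (φ : ι → V →ₗ[𝕜] 𝕜)
    (β : ι → 𝕜) (hβ : ∀ k, 0 ≤ β k) (g : V →ₗ[𝕜] 𝕜) (hg : ∀ w, (∀ k, φ k w ≤ β k) → g w ≤ 0) :
    ∃ l : ι → 𝕜, (∀ k, 0 ≤ l k) ∧ (∀ k, l k * β k = 0) ∧ ∑ k, l k • φ k = g := by
  -- The homogenized system `φ w ≤ β t, 0 ≤ t` on `V × 𝕜`: a solution `(w, t)` rescales to the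
  -- solution `(1 + t)⁻¹ • w` of the original one, because `β ≥ 0`.
  let F : Option ι → V × 𝕜 →ₗ[𝕜] 𝕜 :=
    Option.elim' (-snd 𝕜 V 𝕜) fun k => φ k ∘ₗ fst 𝕜 V 𝕜 - β k • snd 𝕜 V 𝕜
  have hF : ∀ p : V × 𝕜, (∀ o, F o p ≤ 0) → g p.1 ≤ 0 := by
    rintro ⟨w, t⟩ hp
    simp only [Option.forall, F, Option.elim'_none, Option.elim'_some, neg_apply, sub_apply,
      comp_apply, fst_apply, snd_apply, smul_apply, smul_eq_mul, neg_nonpos, sub_nonpos] at hp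
    obtain ⟨ht, hφ⟩ := hp
    have h1t : 0 < 1 + t := by linarith
    have hgw := hg ((1 + t)⁻¹ • w) fun k => by
      rw [map_smul, smul_eq_mul, inv_mul_le_iff₀ h1t]
      nlinarith [hφ k, hβ k]
    rw [map_smul, smul_eq_mul, inv_mul_le_iff₀ h1t, mul_zero] at hgw
    exact hgw
  obtain ⟨l, hl, hlF⟩ := exists_nonneg_sum_smul_eq_of_forall_nonpos F (g ∘ₗ fst 𝕜 V 𝕜) hF
  have hlF_apply (w : V) (t : 𝕜) : -(l none * t) + ∑ k, l (some k) * (φ k w - β k * t) = g w := by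
    simpa [F, Fintype.sum_option] using LinearMap.congr_fun hlF (w, t)
  have hterm : ∀ k ∈ Finset.univ, 0 ≤ l (some k) * β k := fun k _ => mul_nonneg (hl _) (hβ k)
  have hslack : ∑ k, l (some k) * β k = 0 := by
    have h01 := hlF_apply 0 1
    simp only [map_zero, zero_sub, mul_one, mul_neg, Finset.sum_neg_distrib] at h01
    linarith [hl none, Finset.sum_nonneg hterm]
  refine ⟨fun k => l (some k), fun k => hl _,
    fun k => (Finset.sum_eq_zero_iff_of_nonneg hterm).mp hslack k (Finset.mem_univ k), ?_⟩
  ext w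
  simpa using hlF_apply w 0

end Farkas

section NormalCone

variable {E : Type*} [AddCommGroup E] [Module ℝ E]

lemma Submodule.sub_mem_of_mem_vadd {L : Submodule ℝ E} {a x y : E} (hx : x ∈ a +ᵥ (L : Set E))
    (hy : y ∈ a +ᵥ (L : Set E)) : x - y ∈ L := by
  rw [mem_leftAddCoset_iff] at hx hy
  simpa using L.sub_mem hx hy

lemma Submodule.add_mem_vadd {L : Submodule ℝ E} {a x w : E} (hx : x ∈ a +ᵥ (L : Set E))
    (hw : w ∈ L) : x + w ∈ a +ᵥ (L : Set E) := by
  rw [mem_leftAddCoset_iff] at hx ⊢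
  simpa [add_assoc] using L.add_mem hx hw

variable [TopologicalSpace E]

lemma normalCone_add_subset_normalCone_inter (A B : Set E) (xb : E) :
    normalCone A xb + normalCone B xb ⊆ normalCone (A ∩ B) xb := by
  rintro _ ⟨u, hu, v, hv, rfl⟩ x ⟨hxA, hxB⟩
  simpa using add_nonpos (hu x hxA) (hv x hxB)

lemma mem_normalCone_vadd {L : Submodule ℝ E} {a xb : E} (hxb : xb ∈ a +ᵥ (L : Set E))
    {v : E →L[ℝ] ℝ} (hv : ∀ w ∈ L, v w = 0) : v ∈ normalCone (a +ᵥ (L : Set E)) xb :=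
  fun _ hx => (hv _ (L.sub_mem_of_mem_vadd hx hxb)).le

lemma sum_smul_mem_normalCone {ι : Type*} [Fintype ι] (f : ι → E →L[ℝ] ℝ) (α : ι → ℝ) {xb : E}
    {l : ι → ℝ} (hl : ∀ i, 0 ≤ l i) (hslack : ∀ i, l i * (α i - f i xb) = 0) :
    ∑ i, l i • f i ∈ normalCone {x | ∀ i, f i x ≤ α i} xb := by
  intro x hx
  rw [sum_apply]
  refine Finset.sum_nonpos fun i _ => ?_
  rw [smul_apply, smul_eq_mul, map_sub]
  nlinarith [hl i, hx i, hslack i]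

lemma exists_lagrange_multipliers_of_mem_normalCone {ι : Type*} [Fintype ι] (f : ι → E →L[ℝ] ℝ)
    (α : ι → ℝ) (L : Submodule ℝ E) (a : E) {xb : E}
    (hxb : xb ∈ {x | ∀ i, f i x ≤ α i} ∩ (a +ᵥ (L : Set E))) {g : E →L[ℝ] ℝ}
    (hg : g ∈ normalCone ({x | ∀ i, f i x ≤ α i} ∩ (a +ᵥ (L : Set E))) xb) :
    ∃ l : ι → ℝ, (∀ i, 0 ≤ l i) ∧ (∀ i, l i * (α i - f i xb) = 0) ∧
      ∀ w ∈ L, (g - ∑ i, l i • f i) w = 0 := by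
  have hL : ∀ w : L, (∀ i, f i w ≤ α i - f i xb) → g w ≤ 0 := fun w hw => by
    simpa using hg (xb + w)
      ⟨fun i => by simpa using add_le_of_le_sub_left (hw i), L.add_mem_vadd hxb.2 w.2⟩
  obtain ⟨l, hl, hslack, hsum⟩ := LinearMap.exists_lagrange_multipliers
    (fun i => (f i : E →ₗ[ℝ] ℝ) ∘ₗ L.subtype) (fun i => α i - f i xb)
    (fun i => sub_nonneg.mpr (hxb.1 i)) ((g : E →ₗ[ℝ] ℝ) ∘ₗ L.subtype) hL
  refine ⟨l, hl, hslack, fun w hw => ?_⟩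
  rw [sub_apply, sub_eq_zero]
  simpa using (LinearMap.congr_fun hsum ⟨w, hw⟩).symm

end NormalCone

theorem normalCone_inter_pcs_gpcs
    (P Q : Set X) (hP : IsPolyhedral P) (hQ : IsGPolyhedral Q)
    (xb : X) (hxb : xb ∈ P ∩ Q) :
    normalCone (P ∩ Q) xb = normalCone P xb + normalCone Q xb := by
  obtain ⟨m, f, α, rfl⟩ := hP
  obtain ⟨_, a, L, ⟨n, f₂, α₂, rfl⟩, -, rfl⟩ := hQ
  have hinter : {x | ∀ i, f i x ≤ α i} ∩ ({x | ∀ j, f₂ j x ≤ α₂ j} ∩ (a +ᵥ (L : Set X))) =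
      {x | ∀ k, Sum.elim f f₂ k x ≤ Sum.elim α α₂ k} ∩ (a +ᵥ (L : Set X)) := by
    ext x
    simp [Sum.forall, and_assoc]
  refine subset_antisymm ?_ (normalCone_add_subset_normalCone_inter _ _ _)
  intro g hg
  rw [hinter] at hg hxb
  obtain ⟨l, hl, hslack, hgL⟩ := exists_lagrange_multipliers_of_mem_normalCone _ _ L a hxb hg
  rw [Fintype.sum_sum_type] at hgL
  simp only [Sum.elim_inl, Sum.elim_inr, ← sub_sub] at hgL
  have hu : ∑ i, l (.inl i) • f i ∈ normalCone {x | ∀ i, f i x ≤ α i} xb :=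
    sum_smul_mem_normalCone f α (fun i => hl _) (fun i => hslack (.inl i))
  have hu₂ : ∑ j, l (.inr j) • f₂ j ∈ normalCone {x | ∀ j, f₂ j x ≤ α₂ j} xb :=
    sum_smul_mem_normalCone f₂ α₂ (fun j => hl _) (fun j => hslack (.inr j))
  have hv := mem_normalCone_vadd hxb.2 hgL
  exact ⟨_, hu, _, normalCone_add_subset_normalCone_inter _ _ _
    ⟨_, hu₂, _, hv, add_sub_cancel _ _⟩, add_sub_cancel _ _⟩
end

section
/- Let B : X → Y be an affine mapping B(x) = A(x) + b with A continuous linear, and f : Y → (−∞, ∞] a polyhedral convex function. Then for every x̄ ∈ dom(f ∘ B), ∂(f ∘ B)(x̄) = A*(∂f(B(x̄))), where A* is the adjoint of A. -/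
open Set Pointwise

/-!
The epigraph of `f ∘ B` is the preimage of the polyhedron `epi f` under the affine map
`(x, t) ↦ (A x + b, t)`, and `u ∈ ∂(f ∘ B)(x̄)` says exactly that `(u, -1)` is normal to this
epigraph at `(x̄, f (B x̄))`. By Farkas' lemma the normal cone of a polyhedron is generated by the
active constraints, so the normal cone of an affine preimage of a polyhedron is the image of the
normal cone of the polyhedron under the adjoint; no constraint qualification is needed. Thus
`(u, -1) = (A* v, -1)` for some `(v, -1)` normal to `epi f`, that is, `v ∈ ∂f(B x̄)`.
-/

theorem Module.Dual.exists_nonneg_eq_sum_of_forall_nonpos {𝕜 V ι : Type*} [Field 𝕜] [LinearOrder 𝕜]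
    [IsStrictOrderedRing 𝕜] [AddCommGroup V] [Module 𝕜 V] [DecidableEq ι]
    (s : Finset ι) (φ : ι → Module.Dual 𝕜 V) (u : Module.Dual 𝕜 V)
    (h : ∀ d, (∀ i ∈ s, φ i d ≤ 0) → u d ≤ 0) :
    ∃ lam : ι → 𝕜, (∀ i, 0 ≤ lam i) ∧ u = ∑ i ∈ s, lam i • φ i := by
  induction s using Finset.induction_on generalizing φ u with
  | empty =>
    refine ⟨0, fun _ => le_rfl, LinearMap.ext fun d => le_antisymm (h d (by simp)) ?_⟩
    simpa using h (-d) (by simp)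
  | insert j s hj ih =>
    have sum_insert_update (μ : ι → 𝕜) (c : 𝕜) :
        ∑ i ∈ insert j s, Function.update μ j c i • φ i = c • φ j + ∑ i ∈ s, μ i • φ i := by
      rw [Finset.sum_insert hj, Function.update_self]
      congr 1
      exact Finset.sum_congr rfl fun i hi => by
        rw [Function.update_of_ne (ne_of_mem_of_not_mem hi hj)]
    have update_nonneg {μ : ι → 𝕜} {c : 𝕜} (hμ : ∀ i, 0 ≤ μ i) (hc : 0 ≤ c) (i : ι) :
        0 ≤ Function.update μ j c i := by
      rcases eq_or_ne i j with rfl | hij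
      · simpa using hc
      · simpa [hij] using hμ i
    by_cases hs : ∀ d, (∀ i ∈ s, φ i d ≤ 0) → u d ≤ 0
    · obtain ⟨μ, hμ, rfl⟩ := ih φ u hs
      exact ⟨Function.update μ j 0, update_nonneg hμ le_rfl, by simp [sum_insert_update]⟩
    push Not at hs
    obtain ⟨d₁, hjd₁, hsd₁, hud₁⟩ : ∃ d₁, φ j d₁ = 1 ∧ (∀ i ∈ s, φ i d₁ ≤ 0) ∧ 0 < u d₁ := by
      obtain ⟨d₀, hsd₀, hud₀⟩ := hs
      have hj₀ : 0 < φ j d₀ := by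
        by_contra! hj₀
        exact hud₀.not_ge (h d₀ (Finset.forall_mem_insert _ _ _ |>.2 ⟨hj₀, hsd₀⟩))
      refine ⟨(φ j d₀)⁻¹ • d₀, by simp [hj₀.ne'], fun i hi => ?_, ?_⟩
      · simpa using mul_nonpos_of_nonneg_of_nonpos (inv_nonneg.2 hj₀.le) (hsd₀ i hi)
      · simpa using mul_pos (inv_pos.2 hj₀) hud₀
    -- Eliminate `φ j` by projecting along `d₁` onto its kernel.
    obtain ⟨μ, hμ, hu⟩ := ih (fun i => φ i - φ i d₁ • φ j) (u - u d₁ • φ j) fun d hd => by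
      have := h (d - φ j d • d₁) (Finset.forall_mem_insert _ _ _ |>.2
        ⟨by simp [hjd₁], fun i hi => by simpa [mul_comm] using hd i hi⟩)
      simpa [mul_comm] using this
    have hsum : ∑ i ∈ s, μ i * φ i d₁ ≤ 0 :=
      Finset.sum_nonpos fun i hi => mul_nonpos_of_nonneg_of_nonpos (hμ i) (hsd₁ i hi)
    refine ⟨Function.update μ j (u d₁ - ∑ i ∈ s, μ i * φ i d₁),
      update_nonneg hμ (by linarith), ?_⟩
    simp only [smul_sub, Finset.sum_sub_distrib, smul_smul, ← Finset.sum_smul] at hu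
    rw [sum_insert_update]
    linear_combination (norm := module) hu

section Polyhedron

open Filter Topology

variable {ι V W : Type*} [Fintype ι] [AddCommGroup V] [Module ℝ V] [TopologicalSpace V]
  [AddCommGroup W] [Module ℝ W] [TopologicalSpace W]

noncomputable def activeIndices (φ : ι → V →L[ℝ] ℝ) (α : ι → ℝ) (p : V) : Finset ι :=
  {i | φ i p = α i}

theorem eventually_forall_le_add_smul {φ : ι → V →L[ℝ] ℝ} {α : ι → ℝ} {p d : V}
    (hp : ∀ i, φ i p ≤ α i) (hd : ∀ i ∈ activeIndices φ α p, φ i d ≤ 0) :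
    ∀ᶠ ε in 𝓝[>] (0 : ℝ), ∀ i, φ i (p + ε • d) ≤ α i := by
  refine eventually_all.2 fun i => ?_
  simp only [map_add, map_smul, smul_eq_mul]
  rcases (hp i).lt_or_eq with hlt | heq
  · have : Tendsto (fun ε : ℝ => φ i p + ε * φ i d) (𝓝[>] 0) (𝓝 (φ i p)) :=
      ((continuous_const.add (continuous_id.mul continuous_const)).tendsto' 0 _
        (by simp)).mono_left nhdsWithin_le_nhds
    exact (this.eventually (gt_mem_nhds hlt)).mono fun _ => le_of_lt
  · filter_upwards [self_mem_nhdsWithin] with ε (hε : 0 < ε)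
    have := mul_nonpos_of_nonneg_of_nonpos hε.le (hd i (by simp [activeIndices, heq]))
    linarith

theorem mem_normalCone_polyhedron_iff {φ : ι → V →L[ℝ] ℝ} {α : ι → ℝ} {p : V}
    (hp : ∀ i, φ i p ≤ α i) {w : V →L[ℝ] ℝ} :
    w ∈ normalCone {x | ∀ i, φ i x ≤ α i} p ↔
      ∃ lam : ι → ℝ, (∀ i, 0 ≤ lam i) ∧ w = ∑ i ∈ activeIndices φ α p, lam i • φ i := by
  classical
  constructor
  · intro hw
    obtain ⟨lam, hlam, hsum⟩ := Module.Dual.exists_nonneg_eq_sum_of_forall_nonpos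
      (activeIndices φ α p) (fun i => (φ i : V →ₗ[ℝ] ℝ)) (w : V →ₗ[ℝ] ℝ) fun d hd => by
        obtain ⟨ε, hε, hεp : 0 < ε⟩ :=
          ((eventually_forall_le_add_smul hp hd).and self_mem_nhdsWithin).exists
        have := hw _ hε
        rw [add_sub_cancel_left, map_smul, smul_eq_mul] at this
        exact nonpos_of_mul_nonpos_right this hεp
    refine ⟨lam, hlam, ContinuousLinearMap.coe_injective ?_⟩
    simpa using hsum
  · rintro ⟨lam, hlam, rfl⟩ x hx
    rw [sum_apply]
    refine Finset.sum_nonpos fun i hi => ?_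
    have hi : φ i p = α i := by simpa [activeIndices] using hi
    rw [smul_apply, smul_eq_mul, map_sub]
    exact mul_nonpos_of_nonneg_of_nonpos (hlam i) (by linarith [hx i])

theorem IsPolyhedral.exists_comp_eq_of_mem_normalCone_preimage {P : Set V} (hP : IsPolyhedral P)
    (L : W →L[ℝ] V) (c : V) {q : W} (hq : L q + c ∈ P) {w : W →L[ℝ] ℝ}
    (hw : w ∈ normalCone ((fun x => L x + c) ⁻¹' P) q) :
    ∃ g ∈ normalCone P (L q + c), g.comp L = w := by
  obtain ⟨m, F, α, rfl⟩ := hP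
  have hpre : (fun x => L x + c) ⁻¹' {y | ∀ i, F i y ≤ α i} =
      {x | ∀ i, (F i).comp L x ≤ α i - F i c} := by
    ext x; simp [le_sub_iff_add_le]
  have hact : activeIndices (fun i => (F i).comp L) (fun i => α i - F i c) q =
      activeIndices F α (L q + c) := by
    ext i; simp [activeIndices, eq_sub_iff_add_eq]
  have hq' : ∀ i, (F i).comp L q ≤ α i - F i c := by simpa [le_sub_iff_add_le] using hq
  rw [hpre, mem_normalCone_polyhedron_iff hq', hact] at hw
  obtain ⟨lam, hlam, rfl⟩ := hw
  refine ⟨∑ i ∈ activeIndices F α (L q + c), lam i • F i,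
    (mem_normalCone_polyhedron_iff hq).2 ⟨lam, hlam, rfl⟩, ?_⟩
  simp [ContinuousLinearMap.finsetSum_comp]

end Polyhedron

section Subdifferential

variable {U V W : Type*} [AddCommGroup U] [Module ℝ U] [TopologicalSpace U]
  [AddCommGroup V] [Module ℝ V] [TopologicalSpace V]
  [AddCommGroup W] [Module ℝ W] [TopologicalSpace W]

theorem mem_subdiff_iff_mem_normalCone_epi {f : V → EReal} {v : V} {r : ℝ} (hr : f v = r)
    {g : V →L[ℝ] ℝ} :
    g ∈ subdiff f v ↔ g.coprod (-ContinuousLinearMap.id ℝ ℝ) ∈ normalCone (epi f) (v, r) := by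
  simp only [subdiff, normalCone, epi, hr, mem_ofPred_eq, Prod.forall, Prod.mk_sub_mk,
    ContinuousLinearMap.coprod_apply, neg_apply, ContinuousLinearMap.id_apply,
    ← EReal.coe_add]
  refine ⟨fun h y t ht => ?_, fun h y => EReal.le_of_forall_lt_iff_le.1 fun t ht => ?_⟩
  · have := EReal.coe_le_coe_iff.1 ((h y).trans ht)
    linarith
  · have := h y t ht.le
    exact EReal.coe_le_coe_iff.2 (by linarith)

theorem comp_mem_subdiff_comp_add {f : V → EReal} {g : V →L[ℝ] ℝ} (A : U →L[ℝ] V) (b : V) {u : U}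
    (hg : g ∈ subdiff f (A u + b)) : g.comp A ∈ subdiff (fun x => f (A x + b)) u := fun x => by
  simpa [map_sub] using hg (A x + b)

theorem ContinuousLinearMap.eq_coprod_of_comp_prodMap_eq {g : V × W →L[ℝ] ℝ} {A : U →L[ℝ] V}
    {u : U →L[ℝ] ℝ} {v : W →L[ℝ] ℝ} (h : g.comp (A.prodMap (.id ℝ W)) = u.coprod v) :
    g = (g.comp (.inl ℝ V W)).coprod v ∧ (g.comp (.inl ℝ V W)).comp A = u := by
  have hv : g.comp (.inr ℝ V W) = v := ext fun w => by simpa using congr($h (0, w))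
  refine ⟨ext fun p => ?_, ext fun x => by simpa using congr($h (x, 0))⟩
  simp [← hv, ← map_add]

end Subdifferential

variable {X : Type*} [AddCommGroup X] [Module ℝ X] [TopologicalSpace X]
  [IsTopologicalAddGroup X] [ContinuousSMul ℝ X] [LocallyConvexSpace ℝ X] [T2Space X]
variable {Y : Type*} [AddCommGroup Y] [Module ℝ Y] [TopologicalSpace Y]
  [IsTopologicalAddGroup Y] [ContinuousSMul ℝ Y] [LocallyConvexSpace ℝ Y] [T2Space Y]
variable {Z : Type*} [AddCommGroup Z] [Module ℝ Z] [TopologicalSpace Z]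
  [IsTopologicalAddGroup Z] [ContinuousSMul ℝ Z] [LocallyConvexSpace ℝ Z] [T2Space Z]

theorem subdifferential_affine_composition
    (A : X →L[ℝ] Y) (b : Y) (f : Y → EReal)
    (hbot : ∀ y, f y ≠ ⊥) (hf : IsPolyhedral (epi f))
    (xb : X) (hdom : f (A xb + b) ≠ ⊤) :
    subdiff (fun x => f (A x + b)) xb =
      (fun g : Y →L[ℝ] ℝ => g.comp A) '' subdiff f (A xb + b) := by
  obtain ⟨r, hr⟩ : ∃ r : ℝ, f (A xb + b) = r := ⟨_, (EReal.coe_toReal hdom (hbot _)).symm⟩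
  refine Subset.antisymm (fun u hu => ?_)
    (image_subset_iff.2 fun g => comp_mem_subdiff_comp_add A b)
  have hepi : epi (fun x => f (A x + b)) =
      (fun p => A.prodMap (.id ℝ ℝ) p + (b, 0)) ⁻¹' epi f := by
    ext; simp [epi]
  rw [mem_subdiff_iff_mem_normalCone_epi (f := fun x => f (A x + b)) hr, hepi] at hu
  obtain ⟨g, hg, hgu⟩ := hf.exists_comp_eq_of_mem_normalCone_preimage _ (b, 0)
    (by simpa [epi] using hr.le) hu
  obtain ⟨hg_eq, rfl⟩ := ContinuousLinearMap.eq_coprod_of_comp_prodMap_eq hgu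
  refine ⟨g.comp (.inl ℝ Y ℝ), ?_, rfl⟩
  rw [mem_subdiff_iff_mem_normalCone_epi hr, ← hg_eq]
  simpa using hg
end

section
/- Let F : X ⇉ Y be a set-valued mapping and Θ ⊂ Y with one of F, Θ polyhedral convex and the other generalized polyhedral convex. Then for any x̄ ∈ F⁻¹(Θ) and any ȳ ∈ F(x̄) ∩ Θ, N(x̄; F⁻¹(Θ)) = D*F(x̄, ȳ)(N(ȳ; Θ)), where F⁻¹(Θ) = {x : F(x) ∩ Θ ≠ ∅}. -/
/-!
Put `C = gph F ∩ (X × Θ)`. A functional `u ∈ N(x̄; F⁻¹(Θ))` lifts to `(u, 0) ∈ N((x̄, ȳ); C)`.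
One of `gph F`, `X × Θ` is polyhedral and the other generalized polyhedral, so the normal cone of
their intersection is the sum of their normal cones. The normal cone of `X × Θ` is
`{0} × N(ȳ; Θ)`, and a splitting `(u, 0) = (u, -v) + (0, v)` says exactly that
`u ∈ D*F(x̄, ȳ)(v)` with `v ∈ N(ȳ; Θ)`.

The sum rule is Farkas' lemma: a direction in the linear part of the affine constraint that
keeps the active inequalities is feasible for small steps, so on that subspace `u` agrees with a
nonnegative combination of active constraint functionals. The terms coming from the polyhedral
set are normal to it; the remaining terms, plus the part of `u` vanishing on the subspace, are
normal to the other set.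
-/

open Set Pointwise

variable {X : Type*} [AddCommGroup X] [Module ℝ X] [TopologicalSpace X]
  [IsTopologicalAddGroup X] [ContinuousSMul ℝ X] [LocallyConvexSpace ℝ X] [T2Space X]
variable {Y : Type*} [AddCommGroup Y] [Module ℝ Y] [TopologicalSpace Y]
  [IsTopologicalAddGroup Y] [ContinuousSMul ℝ Y] [LocallyConvexSpace ℝ Y] [T2Space Y]
variable {Z : Type*} [AddCommGroup Z] [Module ℝ Z] [TopologicalSpace Z]
  [IsTopologicalAddGroup Z] [ContinuousSMul ℝ Z] [LocallyConvexSpace ℝ Z] [T2Space Z]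

open Filter Topology

section Farkas

variable {G : Type*} [AddCommGroup G] [Module ℝ G]

lemma apply_nonpos_of_mem_hull (ℓ : G →ₗ[ℝ] ℝ) {S : Set G} (hS : ∀ φ ∈ S, ℓ φ ≤ 0) {φ : G}
    (hφ : φ ∈ PointedCone.hull ℝ S) : ℓ φ ≤ 0 := by
  induction hφ using Submodule.span_induction with
  | mem φ h => exact hS φ h
  | zero => simp
  | add φ ψ _ _ hφ hψ => simpa using add_nonpos hφ hψ
  | smul c φ _ hφ =>
    rw [← Nonneg.coe_smul, map_smul, smul_eq_mul]
    exact mul_nonpos_of_nonneg_of_nonpos c.2 hφ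

lemma LinearMap.eq_zero_of_forall_apply_nonpos {u : G →ₗ[ℝ] ℝ} (h : ∀ d, u d ≤ 0) : u = 0 := by
  ext d
  exact le_antisymm (h d) (by simpa using h (-d))

lemma LinearMap.exists_eq_smul_of_ker_le {f g : G →ₗ[ℝ] ℝ} (h : ker f ≤ ker g) :
    ∃ c : ℝ, g = c • f := by
  have hg : g ∈ Submodule.span ℝ (Set.range fun _ : Unit => f) :=
    mem_span_of_iInf_ker_le_ker (by simpa using h)
  rw [Set.range_const, Submodule.mem_span_singleton] at hg
  obtain ⟨c, rfl⟩ := hg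
  exact ⟨c, rfl⟩

theorem mem_hull_image_of_forall_nonpos {ι : Type*} (s : Finset ι) {V : Type*} [AddCommGroup V]
    [Module ℝ V] (f : ι → V →ₗ[ℝ] ℝ) (u : V →ₗ[ℝ] ℝ) (h : ∀ d, (∀ i ∈ s, f i d ≤ 0) → u d ≤ 0) :
    u ∈ PointedCone.hull ℝ (f '' s) := by
  classical
  induction s using Finset.induction_on generalizing V with
  | empty =>
    rw [LinearMap.eq_zero_of_forall_apply_nonpos fun d => h d (by simp)]
    exact zero_mem _
  | insert a s ha ih =>
    let H := LinearMap.ker (f a)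
    let R : (V →ₗ[ℝ] ℝ) →ₗ[{c : ℝ // 0 ≤ c}] (H →ₗ[ℝ] ℝ) :=
      (LinearMap.domRestrict' H).restrictScalars _
    have hH : R u ∈ PointedCone.hull ℝ (R '' (f '' s)) := by
      rw [Set.image_image]
      exact ih (fun i => R (f i)) (R u) fun d hd =>
        h d ((Finset.forall_mem_insert _ _ _).2 ⟨d.2.le, hd⟩)
    rw [PointedCone.hull, Submodule.span_image] at hH
    obtain ⟨z, hz, hRz⟩ := hH
    obtain ⟨c, hc⟩ : ∃ c : ℝ, u - z = c • f a :=
      LinearMap.exists_eq_smul_of_ker_le fun d hd => by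
        rw [LinearMap.mem_ker, LinearMap.sub_apply, sub_eq_zero]
        exact (LinearMap.congr_fun hRz ⟨d, hd⟩).symm
    rw [Finset.coe_insert, Set.image_insert_eq]
    rcases le_or_gt 0 c with hc0 | hc0
    · exact Submodule.mem_span_insert.2 ⟨⟨c, hc0⟩, z, hz, by rw [Nonneg.mk_smul, ← hc]; abel⟩
    · -- `c < 0` makes the constraint `f a` redundant, so the induction hypothesis applies on `V`
      refine Submodule.span_mono (Set.subset_insert _ _) (ih f u fun d hd => ?_)
      rcases le_or_gt (f a d) 0 with had | had
      · exact h d (Finset.forall_mem_insert _ _ _ |>.2 ⟨had, hd⟩)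
      · have hzd : z d ≤ 0 := apply_nonpos_of_mem_hull (LinearMap.applyₗ d)
          (by rintro _ ⟨i, hi, rfl⟩; exact hd i hi) hz
        have hud : u d - z d = c * f a d := by simpa using LinearMap.congr_fun hc d
        nlinarith

end Farkas

section NormalCone

variable {E : Type*} [AddCommGroup E] [Module ℝ E]

lemma add_mem_vadd_submodule {L : Submodule ℝ E} {a z d : E} (hz : z ∈ a +ᵥ (L : Set E))
    (hd : d ∈ L) : z + d ∈ a +ᵥ (L : Set E) := by
  obtain ⟨l, hl, rfl⟩ := hz
  exact ⟨l + d, L.add_mem hl hd, by simp [add_assoc]⟩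

lemma sub_mem_of_mem_vadd_submodule {L : Submodule ℝ E} {a x z : E}
    (hx : x ∈ a +ᵥ (L : Set E)) (hz : z ∈ a +ᵥ (L : Set E)) : x - z ∈ L := by
  obtain ⟨l, hl, rfl⟩ := hx
  obtain ⟨l', hl', rfl⟩ := hz
  simpa using L.sub_mem hl hl'

variable [TopologicalSpace E]

lemma normalCone_anti {Ω Ω' : Set E} (h : Ω ⊆ Ω') (zb : E) :
    normalCone Ω' zb ⊆ normalCone Ω zb :=
  fun _ hφ x hx => hφ x (h hx)

lemma add_mem_normalCone {Ω : Set E} {zb : E} {φ ψ : E →L[ℝ] ℝ} (hφ : φ ∈ normalCone Ω zb)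
    (hψ : ψ ∈ normalCone Ω zb) : φ + ψ ∈ normalCone Ω zb :=
  fun x hx => add_nonpos (hφ x hx) (hψ x hx)

lemma mem_normalCone_of_forall_eq_zero {Ω : Set E} {zb : E} {φ : E →L[ℝ] ℝ}
    (h : ∀ x ∈ Ω, φ (x - zb) = 0) : φ ∈ normalCone Ω zb :=
  fun x hx => (h x hx).le

lemma hull_subset_normalCone {Ω : Set E} {zb : E} {S : Set (E →L[ℝ] ℝ)}
    (hS : S ⊆ normalCone Ω zb) : (PointedCone.hull ℝ S : Set (E →L[ℝ] ℝ)) ⊆ normalCone Ω zb :=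
  fun _ hφ x hx => apply_nonpos_of_mem_hull
    (LinearMap.applyₗ (x - zb) ∘ₗ ContinuousLinearMap.coeLM ℝ) (fun _ hψ => hS hψ x hx) hφ

lemma image_setOf_eq_subset_normalCone {ι : Type*} (f : ι → E →L[ℝ] ℝ) (α : ι → ℝ) (zb : E) :
    f '' {i | f i zb = α i} ⊆ normalCone {x | ∀ i, f i x ≤ α i} zb := by
  rintro _ ⟨i, hi : f i zb = α i, rfl⟩ x hx
  rw [map_sub, hi, sub_nonpos]
  exact hx i

lemma eventually_add_smul_mem_polyhedron {ι : Type*} [Finite ι] {f : ι → E →L[ℝ] ℝ}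
    {α : ι → ℝ} {zb d : E} (hzb : ∀ i, f i zb ≤ α i) (hd : ∀ i, f i zb = α i → f i d ≤ 0) :
    ∀ᶠ t in 𝓝[>] (0 : ℝ), ∀ i, f i (zb + t • d) ≤ α i := by
  refine eventually_all.2 fun i => ?_
  simp only [map_add, map_smul, smul_eq_mul]
  rcases (hzb i).eq_or_lt with hact | hlt
  · filter_upwards [self_mem_nhdsWithin] with t (ht : 0 < t)
    nlinarith [hd i hact]
  · have hcont : Tendsto (fun t : ℝ => f i zb + t * f i d) (𝓝 0) (𝓝 (f i zb)) := by
      refine Continuous.tendsto' ?_ 0 _ (by simp)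
      fun_prop
    exact (hcont.eventually (eventually_le_nhds hlt)).filter_mono nhdsWithin_le_nhds

end NormalCone

section IntersectionRule

variable {E : Type*} [AddCommGroup E] [Module ℝ E] [TopologicalSpace E]

theorem exists_mem_hull_eqOn_of_mem_normalCone {C : Set E} {zb : E} {L : Submodule ℝ E}
    {S : Finset (E →L[ℝ] ℝ)}
    (hC : ∀ d ∈ L, (∀ φ ∈ S, φ d ≤ 0) → ∃ t : ℝ, 0 < t ∧ zb + t • d ∈ C)
    {u : E →L[ℝ] ℝ} (hu : u ∈ normalCone C zb) :
    ∃ w ∈ PointedCone.hull ℝ (S : Set (E →L[ℝ] ℝ)), ∀ d ∈ L, u d = w d := by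
  let R : (E →L[ℝ] ℝ) →ₗ[{c : ℝ // 0 ≤ c}] (L →ₗ[ℝ] ℝ) :=
    { toFun := fun φ => (φ : E →ₗ[ℝ] ℝ).domRestrict L
      map_add' := fun _ _ => rfl
      map_smul' := fun _ _ => rfl }
  have hRu : R u ∈ PointedCone.hull ℝ (R '' S) := by
    refine mem_hull_image_of_forall_nonpos S R (R u) fun d hd => ?_
    obtain ⟨t, ht, hmem⟩ := hC d d.2 hd
    have := hu _ hmem
    rw [add_sub_cancel_left, map_smul, smul_eq_mul] at this
    exact nonpos_of_mul_nonpos_right this ht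
  rw [PointedCone.hull, Submodule.span_image] at hRu
  obtain ⟨w, hw, hRw⟩ := hRu
  exact ⟨w, hw, fun d hd => (LinearMap.congr_fun hRw ⟨d, hd⟩).symm⟩

theorem normalCone_inter_subset_add {P Q : Set E} {zb : E} (hP : IsPolyhedral P)
    (hQ : IsGPolyhedral Q) (hzb : zb ∈ P ∩ Q) :
    normalCone (P ∩ Q) zb ⊆ normalCone P zb + normalCone Q zb := by
  classical
  obtain ⟨m, f, α, rfl⟩ := hP
  obtain ⟨Q₀, a, L, ⟨n, g, β, rfl⟩, -, rfl⟩ := hQ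
  obtain ⟨hzP, hzQ₀, hzL⟩ := hzb
  intro u hu
  let SP := (f '' {i | f i zb = α i}).toFinset
  let SQ := (g '' {j | g j zb = β j}).toFinset
  have htangent : ∀ d ∈ L, (∀ φ ∈ SP ∪ SQ, φ d ≤ 0) →
      ∃ t : ℝ, 0 < t ∧ zb + t • d ∈
        {x | ∀ i, f i x ≤ α i} ∩ ({x | ∀ j, g j x ≤ β j} ∩ (a +ᵥ (L : Set E))) := by
    intro d hd hS
    have hP := eventually_add_smul_mem_polyhedron hzP fun i hi =>
      hS _ (Finset.mem_union_left _ (Set.mem_toFinset.2 ⟨i, hi, rfl⟩))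
    have hQ := eventually_add_smul_mem_polyhedron hzQ₀ fun j hj =>
      hS _ (Finset.mem_union_right _ (Set.mem_toFinset.2 ⟨j, hj, rfl⟩))
    obtain ⟨t, ⟨htP, htQ⟩, ht⟩ := ((hP.and hQ).and self_mem_nhdsWithin).exists
    exact ⟨t, ht, htP, htQ, add_mem_vadd_submodule hzL (L.smul_mem t hd)⟩
  obtain ⟨w, hw, huw⟩ := exists_mem_hull_eqOn_of_mem_normalCone htangent hu
  rw [Finset.coe_union, Set.coe_toFinset, Set.coe_toFinset, PointedCone.hull,
    Submodule.span_union, Submodule.mem_sup] at hw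
  obtain ⟨φ, hφ, ψ, hψ, rfl⟩ := hw
  refine ⟨φ, hull_subset_normalCone (image_setOf_eq_subset_normalCone f α zb) hφ, u - φ, ?_,
    add_sub_cancel _ _⟩
  rw [show u - φ = ψ + (u - (φ + ψ)) by abel]
  refine add_mem_normalCone (normalCone_anti inter_subset_left _
    (hull_subset_normalCone (image_setOf_eq_subset_normalCone g β zb) hψ))
    (mem_normalCone_of_forall_eq_zero fun x hx => ?_)
  simpa [sub_eq_zero] using huw _ (sub_mem_of_mem_vadd_submodule hx.2 hzL)

end IntersectionRule

section Product

variable {U : Type*} [AddCommGroup U] [Module ℝ U] [TopologicalSpace U]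
  {V : Type*} [AddCommGroup V] [Module ℝ V] [TopologicalSpace V]

lemma IsPolyhedral.univ_prod {Θ : Set V} (hΘ : IsPolyhedral Θ) :
    IsPolyhedral (univ ×ˢ Θ : Set (U × V)) := by
  obtain ⟨m, f, α, rfl⟩ := hΘ
  exact ⟨m, fun i => (f i).comp (.snd ℝ U V), α, by ext; simp⟩

lemma IsGPolyhedral.univ_prod {Θ : Set V} (hΘ : IsGPolyhedral Θ) :
    IsGPolyhedral (univ ×ˢ Θ : Set (U × V)) := by
  obtain ⟨P, a, L, hP, hL, rfl⟩ := hΘ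
  refine ⟨univ ×ˢ P, (0, a), (⊤ : Submodule ℝ U).prod L, hP.univ_prod, ?_, ?_⟩
  · rw [Submodule.prod_coe, Submodule.top_coe]
    exact isClosed_univ.prod hL
  · ext ⟨x, y⟩
    simp [Set.mem_vadd_set_iff_neg_vadd_mem]

lemma exists_eq_comp_snd_of_mem_normalCone_univ_prod {Θ : Set V} {xb : U} {yb : V}
    {ψ : U × V →L[ℝ] ℝ} (hψ : ψ ∈ normalCone (univ ×ˢ Θ) (xb, yb)) (hyb : yb ∈ Θ) :
    ∃ v ∈ normalCone Θ yb, ψ = v.comp (.snd ℝ U V) := by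
  have hfst : ∀ x, ψ (x, 0) = 0 := fun x => by
    have h₁ := hψ (xb + x, yb) ⟨mem_univ _, hyb⟩
    have h₂ := hψ (xb - x, yb) ⟨mem_univ _, hyb⟩
    rw [Prod.mk_sub_mk, add_sub_cancel_left, sub_self] at h₁
    rw [Prod.mk_sub_mk, sub_sub_cancel_left, sub_self, ← neg_zero, ← Prod.neg_mk, map_neg] at h₂
    linarith
  refine ⟨ψ.comp (.inr ℝ U V), fun y hy => ?_, ?_⟩
  · simpa using hψ (xb, y) ⟨mem_univ _, hy⟩
  · ext x <;> simp [hfst]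

lemma mem_coderiv_iff {F : U → Set V} {xb : U} {yb : V} {u : U →L[ℝ] ℝ} {v : V →L[ℝ] ℝ} :
    u ∈ coderiv F xb yb v ↔
      u.comp (.fst ℝ U V) - v.comp (.snd ℝ U V) ∈ normalCone (gph F) (xb, yb) :=
  ⟨fun h p hp => h p.1 p.2 hp, fun h x y hy => h (x, y) hy⟩

lemma comp_fst_mem_normalCone_gph_inter {F : U → Set V} {Θ : Set V} {xb : U} {yb : V}
    {u : U →L[ℝ] ℝ} (hu : u ∈ normalCone {x | (F x ∩ Θ).Nonempty} xb) :
    u.comp (.fst ℝ U V) ∈ normalCone (gph F ∩ univ ×ˢ Θ) (xb, yb) :=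
  fun p ⟨hpF, _, hpΘ⟩ => hu p.1 ⟨p.2, hpF, hpΘ⟩

end Product

theorem normalCone_preimage
    (F : X → Set Y) (Θ : Set Y)
    (hFΘ : (IsPolyhedral (gph F) ∧ IsGPolyhedral Θ) ∨
           (IsGPolyhedral (gph F) ∧ IsPolyhedral Θ))
    (xb : X) (yb : Y) (hyb : yb ∈ F xb ∩ Θ) :
    normalCone {x : X | (F x ∩ Θ).Nonempty} xb =
      ⋃ v ∈ normalCone Θ yb, coderiv F xb yb v := by
  have hzb : ((xb, yb) : X × Y) ∈ gph F ∩ univ ×ˢ Θ := ⟨hyb.1, mem_univ _, hyb.2⟩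
  ext u
  simp only [mem_iUnion, exists_prop]
  refine ⟨fun hu => ?_, fun ⟨v, hv, huv⟩ x ⟨y, hyx, hyΘ⟩ => by linarith [huv x y hyx, hv y hyΘ]⟩
  obtain ⟨φ, hφ, ψ, hψ, hsum⟩ : u.comp (.fst ℝ X Y) ∈
      normalCone (gph F) (xb, yb) + normalCone (univ ×ˢ Θ) (xb, yb) := by
    have hu' := comp_fst_mem_normalCone_gph_inter (yb := yb) hu
    rcases hFΘ with ⟨hF, hΘ⟩ | ⟨hF, hΘ⟩
    · exact normalCone_inter_subset_add hF hΘ.univ_prod hzb hu'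
    · rw [inter_comm] at hzb hu'
      rw [add_comm]
      exact normalCone_inter_subset_add hΘ.univ_prod hF hzb hu'
  obtain ⟨v, hv, rfl⟩ := exists_eq_comp_snd_of_mem_normalCone_univ_prod hψ hyb.2
  exact ⟨v, hv, mem_coderiv_iff.2 (eq_sub_of_add_eq hsum ▸ hφ)⟩
end
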